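/- In an associative ℚ(q)-algebra, let F_b, F_{b'}, F_{b''}, E, K be elements with [E,F_b]=0, [E,F_{b'}] = −q^{-1/2}K·F_{b''}, F_bK = q^{-1}K F_b, and F_bF_{b''}=F_{b''}F_b. Set F_β := −q^{1/2}F_bF_{b'} + q^{-1/2}F_{b'}F_b. Then [E,F_β]=0. -/

import Mathlib

/-! By the Leibniz rule, `[E, F_b F_{b'}] = F_b [E, F_{b'}]` and `[E, F_{b'} F_b] = [E, F_{b'}] F_b`,
both multiples of `K F_b F_{b''}` once `F_b` is moved past `K` (at the cost of `q⁻¹`) and past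
`F_{b''}`. The coefficients `-q^{1/2}` and `q^{-1/2}` in `F_β` make the two contributions cancel. -/

theorem Ring.lie_mul {R : Type*} [Ring R] (x y z : R) :
    ⁅x, y * z⁆ = ⁅x, y⁆ * z + y * ⁅x, z⁆ := by
  simp only [Ring.lie_def]
  noncomm_ring

/-- Case α < β (α a strict subinterval of β) of the quantum double relation: the
lowering operator of β = b ⊕ b' commutes with E = E_α, where b' = α ⊕ b''. Here v
plays the role of q^{1/2} (q = v^2) and K of K_α. -/
theorem stmt15 {F A : Type*} [Field F] [Ring A] [Algebra F A]
    (v : F) (hv : v ≠ 0)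
    (Fb Fb' Fb'' E K Fβ : A)
    (h1 : E * Fb = Fb * E)
    (h2 : E * Fb' - Fb' * E = -(v⁻¹ • (K * Fb'')))
    (h3 : Fb * K = (v ^ 2)⁻¹ • (K * Fb))
    (h4 : Fb * Fb'' = Fb'' * Fb)
    (hβ : Fβ = -(v • (Fb * Fb')) + v⁻¹ • (Fb' * Fb)) :
    E * Fβ = Fβ * E := by
  have hb : ⁅E, Fb⁆ = 0 := commute_iff_lie_eq.mp h1
  have hb' : ⁅E, Fb'⁆ = -(v⁻¹ • (K * Fb'')) := h2
  have hbb' : ⁅E, Fb * Fb'⁆ = -((v⁻¹ * (v ^ 2)⁻¹) • (K * Fb * Fb'')) := by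
    rw [Ring.lie_mul, hb, hb', zero_mul, zero_add, mul_neg, mul_smul_comm, ← mul_assoc, h3,
      smul_mul_assoc, smul_smul]
  have hb'b : ⁅E, Fb' * Fb⁆ = -(v⁻¹ • (K * Fb * Fb'')) := by
    rw [Ring.lie_mul, hb, hb', mul_zero, add_zero, neg_mul, smul_mul_assoc, mul_assoc K, ← h4,
      mul_assoc]
  have hcoeff : v * (v⁻¹ * (v ^ 2)⁻¹) = v⁻¹ * v⁻¹ := by
    field_simp
  have hβ_lie : ⁅E, Fβ⁆ = -(v • ⁅E, Fb * Fb'⁆) + v⁻¹ • ⁅E, Fb' * Fb⁆ := by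
    simp only [hβ, Ring.lie_def, mul_add, add_mul, mul_neg, neg_mul, mul_smul_comm, smul_mul_assoc,
      smul_sub]
    abel
  refine commute_iff_lie_eq.mpr ?_
  rw [hβ_lie, hbb', hb'b, smul_neg, neg_neg, smul_neg, smul_smul, smul_smul, hcoeff, add_neg_cancel]
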